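/- Let G' be a graph, let x be an optimal first move for Dominator in the Dominator-start domination game on G' (so γ_g(G') is achieved when Dominator starts at x), and let G be obtained from G' by attaching a pendant leaf v to x. Then γ_g(G) = γ_g(G') = γ_g(G−v). -/

import Mathlib

open Classical

noncomputable section

namespace DomGame

variable {V : Type*} [Fintype V]

/-- Closed neighborhood of `v` as a `Finset`. -/
noncomputable def N (G : SimpleGraph V) (v : V) : Finset V :=
  Finset.univ.filter (fun u => G.Adj v u ∨ u = v)

/-- Legal moves given the set `S` of already dominated vertices. -/
noncomputable def moves (G : SimpleGraph V) (S : Finset V) : Finset V :=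
  Finset.univ.filter (fun v => ¬ N G v ⊆ S)

lemma card_lt {G : SimpleGraph V} {S : Finset V} (v : V) (hv : v ∈ moves G S) :
    (Finset.univ \ (S ∪ N G v)).card < (Finset.univ \ S).card := by
  simp only [moves, Finset.mem_filter] at hv
  obtain ⟨u, hu, hus⟩ := Finset.not_subset.mp hv.2
  apply Finset.card_lt_card
  refine ⟨Finset.sdiff_subset_sdiff (le_refl _) Finset.subset_union_left, ?_⟩
  intro hsub
  have := hsub (Finset.mem_sdiff.mpr ⟨Finset.mem_univ u, hus⟩)
  rw [Finset.mem_sdiff, Finset.mem_union] at this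
  exact this.2 (Or.inr hu)

mutual
/-- Number of moves with optimal play when it is Dominator's turn and
`S` is the set of already dominated vertices. -/
noncomputable def gameD (G : SimpleGraph V) (S : Finset V) : ℕ :=
  if h : (moves G S).Nonempty then
    1 + (moves G S).attach.inf' (by simpa using h)
      (fun v => gameS G (S ∪ N G v.1))
  else 0
termination_by (Finset.univ \ S).card
decreasing_by exact card_lt v.1 v.2

/-- Number of moves with optimal play when it is Staller's turn. -/
noncomputable def gameS (G : SimpleGraph V) (S : Finset V) : ℕ :=
  if h : (moves G S).Nonempty then
    1 + (moves G S).attach.sup' (by simpa using h)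
      (fun v => gameD G (S ∪ N G v.1))
  else 0
termination_by (Finset.univ \ S).card
decreasing_by exact card_lt v.1 v.2
end

/-- The (Dominator-start) game domination number. -/
noncomputable def gammaG (G : SimpleGraph V) : ℕ := gameD G ∅

/-- The Staller-start game domination number. -/
noncomputable def gammaG' (G : SimpleGraph V) : ℕ := gameS G ∅

end DomGame

open DomGame

/-- The graph obtained from `G'` by attaching a pendant leaf (the vertex
`inr ()`) to the vertex `x`. -/
noncomputable def addLeaf {V : Type*} (G' : SimpleGraph V) (x : V) :
    SimpleGraph (V ⊕ Unit) :=
  SimpleGraph.fromRel (fun a b =>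
    match a, b with
    | Sum.inl u, Sum.inl w => G'.Adj u w
    | Sum.inl u, Sum.inr _ => u = x
    | _, _ => False)


/-!
By the Continuation Principle the game values are antitone in the set of dominated vertices, so
Dominator may even play a vertex that dominates nothing new:
`gameD G S ≤ 1 + gameS G (S ∪ N G v)` for every `v`.

Upper bound: Dominator opens on `G` with `x`. Afterwards the leaf and `x` are dominated, and the
rest of the game on `G` is move for move the game on `G'` started from `N G' x`, whose value is
`γ_g(G') - 1` because `x` is an optimal first move.

Lower bound: on `G'`, Dominator copies the moves of an optimal Dominator on `G`, replacing a move
on the leaf by `x`. This works because the trace on `G'` of every closed neighbourhood of `G` lies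
in a closed neighbourhood of `G'`, while Staller's moves on `G'` remain legal on `G`.

Finally `G - v` is isomorphic to `G'`, and the game value is an isomorphism invariant.
-/

namespace DomGame

variable {V W : Type*} [Fintype V] [Fintype W]

section Basic

variable {G : SimpleGraph V} {S T : Finset V} {u v : V}

lemma mem_N : u ∈ N G v ↔ G.Adj v u ∨ u = v := by
  simp [N]

lemma self_mem_N (v : V) : v ∈ N G v :=
  mem_N.mpr (Or.inr rfl)

lemma mem_moves : v ∈ moves G S ↔ ¬ N G v ⊆ S := by
  simp [moves]

lemma moves_anti (hST : S ⊆ T) : moves G T ⊆ moves G S :=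
  fun _ hv => mem_moves.mpr fun h => mem_moves.mp hv (h.trans hST)

lemma union_N_eq_self (hv : v ∉ moves G S) : S ∪ N G v = S :=
  Finset.union_eq_left.mpr (not_not.mp (mt mem_moves.mpr hv))

lemma gameD_eq_zero (h : moves G S = ∅) : gameD G S = 0 := by
  rw [gameD, dif_neg (by simp [h])]

lemma gameS_eq_zero (h : moves G S = ∅) : gameS G S = 0 := by
  rw [gameS, dif_neg (by simp [h])]

lemma gameD_le_of_mem_moves (hv : v ∈ moves G S) :
    gameD G S ≤ 1 + gameS G (S ∪ N G v) := by
  rw [gameD, dif_pos ⟨v, hv⟩]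
  exact Nat.add_le_add_left
    (Finset.inf'_le (fun w : moves G S => gameS G (S ∪ N G w.1))
      (Finset.mem_attach _ ⟨v, hv⟩)) 1

lemma le_gameD_of_forall {k : ℕ} (h₀ : moves G S = ∅ → k = 0)
    (h : ∀ v ∈ moves G S, k ≤ 1 + gameS G (S ∪ N G v)) : k ≤ gameD G S := by
  rcases (moves G S).eq_empty_or_nonempty with hS | hS
  · exact (h₀ hS).trans_le (Nat.zero_le _)
  rw [gameD, dif_pos hS]
  obtain ⟨⟨w, hw⟩, -, he⟩ := Finset.exists_mem_eq_inf' (Finset.attach_nonempty_iff.mpr hS)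
    fun w : moves G S => gameS G (S ∪ N G w.1)
  exact he ▸ h w hw

lemma le_gameS_of_mem_moves (hv : v ∈ moves G S) :
    1 + gameD G (S ∪ N G v) ≤ gameS G S := by
  rw [gameS, dif_pos ⟨v, hv⟩]
  exact Nat.add_le_add_left
    (Finset.le_sup' (fun w : moves G S => gameD G (S ∪ N G w.1))
      (Finset.mem_attach _ ⟨v, hv⟩)) 1

lemma gameS_le_of_forall {k : ℕ} (h : ∀ v ∈ moves G S, 1 + gameD G (S ∪ N G v) ≤ k) :
    gameS G S ≤ k := by
  rcases (moves G S).eq_empty_or_nonempty with hS | hS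
  · exact (gameS_eq_zero hS).trans_le k.zero_le
  rw [gameS, dif_pos hS]
  obtain ⟨⟨w, hw⟩, -, he⟩ := Finset.exists_mem_eq_sup' (Finset.attach_nonempty_iff.mpr hS)
    fun w : moves G S => gameD G (S ∪ N G w.1)
  exact he ▸ h w hw

theorem induction_on_moves {motive : Finset V → Prop} (S : Finset V)
    (step : ∀ S, (∀ v ∈ moves G S, motive (S ∪ N G v)) → motive S) : motive S := by
  induction hn : (Finset.univ \ S).card using Nat.strong_induction_on generalizing S with
  | _ n ih => exact step S fun v hv => ih _ (hn ▸ card_lt v hv) _ rfl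

theorem continuation_principle (hST : S ⊆ T) :
    gameD G T ≤ gameD G S ∧ gameS G T ≤ gameS G S := by
  induction S using induction_on_moves (G := G) generalizing T with
  | step S ih =>
    constructor
    · refine le_gameD_of_forall (fun hS => gameD_eq_zero ?_) fun v hv => ?_
      · exact Finset.subset_empty.mp (hS ▸ moves_anti hST)
      -- Dominator answers `v` with `v` itself if it is still legal, and otherwise with any move.
      obtain hT | ⟨w, hw, hvw⟩ :
          moves G T = ∅ ∨ ∃ w ∈ moves G T, S ∪ N G v ⊆ T ∪ N G w := by
        by_cases hvT : v ∈ moves G T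
        · exact Or.inr ⟨v, hvT, Finset.union_subset_union hST le_rfl⟩
        rcases (moves G T).eq_empty_or_nonempty with hT | ⟨w, hw⟩
        · exact Or.inl hT
        refine Or.inr ⟨w, hw, Finset.union_subset (hST.trans Finset.subset_union_left) ?_⟩
        exact (union_N_eq_self hvT ▸ Finset.subset_union_right).trans Finset.subset_union_left
      · exact (gameD_eq_zero hT).trans_le (Nat.zero_le _)
      · exact (gameD_le_of_mem_moves hw).trans (by gcongr; exact (ih v hv hvw).2)
    · refine gameS_le_of_forall fun v hv => ?_
      have hvS := moves_anti hST hv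
      calc 1 + gameD G (T ∪ N G v) ≤ 1 + gameD G (S ∪ N G v) := by
            gcongr; exact (ih v hvS (Finset.union_subset_union hST le_rfl)).1
        _ ≤ gameS G S := le_gameS_of_mem_moves hvS

theorem gameS_antitone : Antitone (gameS G) :=
  fun _ _ h => (continuation_principle h).2

theorem gameD_le_one_add_gameS_union (v : V) : gameD G S ≤ 1 + gameS G (S ∪ N G v) := by
  by_cases hv : v ∈ moves G S
  · exact gameD_le_of_mem_moves hv
  rw [union_N_eq_self hv]
  rcases (moves G S).eq_empty_or_nonempty with hS | ⟨w, hw⟩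
  · exact (gameD_eq_zero hS).trans_le (Nat.zero_le _)
  exact (gameD_le_of_mem_moves hw).trans (by gcongr; exact gameS_antitone Finset.subset_union_left)

end Basic

section OneRound

variable {G : SimpleGraph V} {H : SimpleGraph W} {S : Finset V} {T : Finset W} {f : V → W}

lemma gameD_eq_gameD_of_moves (hmaps : ∀ u ∈ moves G S, f u ∈ moves H T)
    (hsurj : ∀ w ∈ moves H T, ∃ u ∈ moves G S, f u = w)
    (hnext : ∀ u ∈ moves G S, gameS G (S ∪ N G u) = gameS H (T ∪ N H (f u))) :
    gameD G S = gameD H T := by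
  apply le_antisymm
  · refine le_gameD_of_forall (fun hT => gameD_eq_zero ?_) fun w hw => ?_
    · exact Finset.eq_empty_of_forall_notMem fun u hu => by simpa [hT] using hmaps u hu
    obtain ⟨u, hu, rfl⟩ := hsurj w hw
    exact hnext u hu ▸ gameD_le_of_mem_moves hu
  · refine le_gameD_of_forall (fun hS => gameD_eq_zero ?_) fun u hu => ?_
    · refine Finset.eq_empty_of_forall_notMem fun w hw => ?_
      obtain ⟨u, hu, -⟩ := hsurj w hw
      simp [hS] at hu
    exact (hnext u hu).symm ▸ gameD_le_of_mem_moves (hmaps u hu)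

lemma gameS_eq_gameS_of_moves (hmaps : ∀ u ∈ moves G S, f u ∈ moves H T)
    (hsurj : ∀ w ∈ moves H T, ∃ u ∈ moves G S, f u = w)
    (hnext : ∀ u ∈ moves G S, gameD G (S ∪ N G u) = gameD H (T ∪ N H (f u))) :
    gameS G S = gameS H T := by
  apply le_antisymm
  · exact gameS_le_of_forall fun u hu => hnext u hu ▸ le_gameS_of_mem_moves (hmaps u hu)
  · refine gameS_le_of_forall fun w hw => ?_
    obtain ⟨u, hu, rfl⟩ := hsurj w hw
    exact (hnext u hu).symm ▸ le_gameS_of_mem_moves hu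

end OneRound

section Embedding

variable {G' : SimpleGraph V} {G : SimpleGraph W} (f : G' ↪g G) {T : Finset W} {u : V}

lemma apply_mem_N_apply_iff {w : V} : f w ∈ N G (f u) ↔ w ∈ N G' u := by
  simp only [mem_N, f.map_adj_iff, f.injective.eq_iff]

lemma preimage_N (u : V) : (N G (f u)).preimage f f.injective.injOn = N G' u := by
  ext w
  rw [Finset.mem_preimage, apply_mem_N_apply_iff]

lemma preimage_union_N (T : Finset W) (u : V) :
    (T ∪ N G (f u)).preimage f f.injective.injOn = T.preimage f f.injective.injOn ∪ N G' u := by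
  rw [Finset.preimage_union, preimage_N]

lemma apply_mem_moves (hu : u ∈ moves G' (T.preimage f f.injective.injOn)) :
    f u ∈ moves G T := by
  obtain ⟨w, hw, hwT⟩ := Finset.not_subset.mp (mem_moves.mp hu)
  exact mem_moves.mpr (Finset.not_subset.mpr
    ⟨f w, (apply_mem_N_apply_iff f).mpr hw, fun h => hwT (Finset.mem_preimage.mpr h)⟩)

lemma exists_apply_eq_of_mem_moves (hT : ∀ w ∉ Set.range f, N G w ⊆ T) {w : W}
    (hw : w ∈ moves G T) : ∃ u ∈ moves G' (T.preimage f f.injective.injOn), f u = w := by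
  have mem_range_of_notMem : ∀ z ∉ T, z ∈ Set.range f :=
    fun z hz => by_contra fun h => hz (hT z h (self_mem_N z))
  obtain ⟨z, hz, hzT⟩ := Finset.not_subset.mp (mem_moves.mp hw)
  obtain ⟨u, rfl⟩ : w ∈ Set.range f := by_contra fun h => mem_moves.mp hw (hT w h)
  obtain ⟨v, rfl⟩ := mem_range_of_notMem _ hzT
  exact ⟨u, mem_moves.mpr (Finset.not_subset.mpr
    ⟨v, (apply_mem_N_apply_iff f).mp hz, fun h => hzT (Finset.mem_preimage.mp h)⟩), rfl⟩

theorem gameD_and_gameS_eq_preimage (T : Finset W) (hT : ∀ w ∉ Set.range f, N G w ⊆ T) :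
    gameD G' (T.preimage f f.injective.injOn) = gameD G T ∧
      gameS G' (T.preimage f f.injective.injOn) = gameS G T := by
  induction T using induction_on_moves (G := G) with
  | step T ih =>
    have hmaps (u) (hu : u ∈ moves G' (T.preimage f f.injective.injOn)) := apply_mem_moves f hu
    have hsurj (w) (hw : w ∈ moves G T) := exists_apply_eq_of_mem_moves f hT hw
    have hnext (u) (hu : u ∈ moves G' (T.preimage f f.injective.injOn)) := by
      have := ih (f u) (hmaps u hu) fun w hw => (hT w hw).trans Finset.subset_union_left
      rwa [preimage_union_N] at this
    exact ⟨gameD_eq_gameD_of_moves hmaps hsurj fun u hu => (hnext u hu).2,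
      gameS_eq_gameS_of_moves hmaps hsurj fun u hu => (hnext u hu).1⟩

theorem gameD_and_gameS_preimage_le
    (hN : ∀ w, ∃ u, (N G w).preimage f f.injective.injOn ⊆ N G' u) (T : Finset W) :
    gameD G' (T.preimage f f.injective.injOn) ≤ gameD G T ∧
      gameS G' (T.preimage f f.injective.injOn) ≤ gameS G T := by
  induction T using induction_on_moves (G := G) with
  | step T ih =>
    constructor
    · refine le_gameD_of_forall (fun hT => gameD_eq_zero ?_) fun w hw => ?_
      · exact Finset.eq_empty_of_forall_notMem fun u hu => by simpa [hT] using apply_mem_moves f hu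
      obtain ⟨u, hu⟩ := hN w
      calc gameD G' (T.preimage f f.injective.injOn)
          ≤ 1 + gameS G' (T.preimage f f.injective.injOn ∪ N G' u) :=
            gameD_le_one_add_gameS_union u
        _ ≤ 1 + gameS G' ((T ∪ N G w).preimage f f.injective.injOn) := by
            rw [Finset.preimage_union]
            gcongr
            exact gameS_antitone (Finset.union_subset_union le_rfl hu)
        _ ≤ 1 + gameS G (T ∪ N G w) := by gcongr; exact (ih w hw).2
    · refine gameS_le_of_forall fun u hu => ?_
      have hfu := apply_mem_moves f hu
      calc 1 + gameD G' (T.preimage f f.injective.injOn ∪ N G' u)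
          = 1 + gameD G' ((T ∪ N G (f u)).preimage f f.injective.injOn) := by
            rw [preimage_union_N]
        _ ≤ 1 + gameD G (T ∪ N G (f u)) := by gcongr; exact (ih _ hfu).1
        _ ≤ gameS G T := le_gameS_of_mem_moves hfu

end Embedding

theorem gammaG_eq_of_iso {G : SimpleGraph V} {H : SimpleGraph W} (e : G ≃g H) :
    gammaG G = gammaG H := by
  have h := (gameD_and_gameS_eq_preimage e.toEmbedding ∅ fun w hw =>
    (hw (e.surjective w)).elim).1
  rwa [Finset.preimage_empty] at h

theorem gammaG_eq_of_leaf {G' : SimpleGraph V} {G : SimpleGraph W} (f : G' ↪g G) {ℓ : W} {x : V}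
    (hf : Set.range f = {ℓ}ᶜ) (hℓ : ∀ w, G.Adj ℓ w ↔ w = f x)
    (hx : gammaG G' = 1 + gameS G' (N G' x)) :
    gammaG G = gammaG G' := by
  have eq_of_notMem_range (w : W) (hw : w ∉ Set.range f) : w = ℓ := by simpa [hf] using hw
  have mem_N_leaf (w : W) : w ∈ N G ℓ ↔ w = f x ∨ w = ℓ := by rw [mem_N, hℓ]
  apply le_antisymm
  · have hN : ∀ w ∉ Set.range f, N G w ⊆ N G (f x) := by
      intro w hw z hz
      rw [eq_of_notMem_range w hw, mem_N_leaf] at hz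
      rcases hz with rfl | rfl
      · exact self_mem_N _
      · exact mem_N.mpr (Or.inl ((hℓ _).mpr rfl).symm)
    calc gammaG G ≤ 1 + gameS G (∅ ∪ N G (f x)) := gameD_le_one_add_gameS_union _
      _ = 1 + gameS G' (N G' x) := by
        rw [Finset.empty_union, ← (gameD_and_gameS_eq_preimage f _ hN).2, preimage_N]
      _ = gammaG G' := hx.symm
  · have hN (w : W) : ∃ u, (N G w).preimage f f.injective.injOn ⊆ N G' u := by
      by_cases hw : w ∈ Set.range f
      · obtain ⟨u, rfl⟩ := hw
        exact ⟨u, (preimage_N f u).le⟩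
      refine ⟨x, fun u hu => ?_⟩
      rw [Finset.mem_preimage, eq_of_notMem_range w hw, mem_N_leaf] at hu
      rcases hu with hu | hu
      · exact (f.injective hu).symm ▸ self_mem_N x
      · exact absurd hu (hf ▸ Set.mem_range_self u : f u ∈ ({ℓ}ᶜ : Set W))
    have h := (gameD_and_gameS_preimage_le f hN ∅).1
    rwa [Finset.preimage_empty] at h

end DomGame

section AddLeaf

variable {V : Type*} {G' : SimpleGraph V} {x : V}

lemma addLeaf_adj_inl_inl {u w : V} : (addLeaf G' x).Adj (.inl u) (.inl w) ↔ G'.Adj u w := by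
  simp only [addLeaf, SimpleGraph.fromRel_adj, ne_eq, Sum.inl.injEq]
  exact ⟨fun ⟨_, h⟩ => h.elim id SimpleGraph.Adj.symm, fun h => ⟨h.ne, Or.inl h⟩⟩

lemma addLeaf_adj_inr {w : V ⊕ Unit} : (addLeaf G' x).Adj (.inr ()) w ↔ w = .inl x := by
  cases w <;> simp [addLeaf, eq_comm]

def addLeafEmbedding (G' : SimpleGraph V) (x : V) : G' ↪g addLeaf G' x :=
  ⟨Function.Embedding.inl, addLeaf_adj_inl_inl⟩

lemma coe_addLeafEmbedding : ⇑(addLeafEmbedding G' x) = Sum.inl := rfl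

lemma range_addLeafEmbedding : Set.range (addLeafEmbedding G' x) = {Sum.inr ()}ᶜ := by
  rw [coe_addLeafEmbedding, ← Set.compl_range_inr, Set.range_unique]

def addLeafIsoInduce (G' : SimpleGraph V) (x : V) :
    G' ≃g (addLeaf G' x).induce {Sum.inr ()}ᶜ :=
  (addLeafEmbedding G' x).isoInduceRange.trans <| SimpleGraph.Iso.refl.induce <| by
    rw [range_addLeafEmbedding]
    exact Set.bijOn_id _

end AddLeaf

/-- If `x` is an optimal first move for Dominator in the Dominator-start game
on `G'` (i.e. playing `x` first achieves `γ_g(G')`) and `G` is obtained from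
`G'` by attaching a pendant leaf `v` to `x`, then
`γ_g(G) = γ_g(G') = γ_g(G−v)`. -/
theorem gameD_add_leaf {V : Type*} [Fintype V] (G' : SimpleGraph V) (x : V)
    (hx : gammaG G' = 1 + gameS G' (N G' x)) :
    gammaG (addLeaf G' x) = gammaG G' ∧
    gammaG ((addLeaf G' x).induce {(Sum.inr () : V ⊕ Unit)}ᶜ) = gammaG G' :=
  ⟨gammaG_eq_of_leaf (addLeafEmbedding G' x) range_addLeafEmbedding (fun _ => addLeaf_adj_inr) hx,
    (gammaG_eq_of_iso (addLeafIsoInduce G' x)).symm⟩
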